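/- arXiv:2506.21870 — 3 statements merged into one kernel-verified Lean document; each statement's English description precedes it below -/
import Mathlib

section
/- Let (A,[·,·],·) be a finite-dimensional Poisson algebra over a field, r ∈ A⊗A, and let S be the symmetric part of r (so r = S + Λ with τ(S) = S and τ(Λ) = −Λ). Then the following are equivalent: (1) S is (ad,L)-invariant; (2) S₊(ad*(a)x*) + [a, S₊(x*)] = 0 and S₊(L*(a)x*) − a·S₊(x*) = 0 for all a ∈ A, x* ∈ A*; (3) ad*(S₊(x*))y* + ad*(S₊(y*))x* = 0 and L*(S₊(x*))y* − L*(S₊(y*))x* = 0 for all x*, y* ∈ A*. -/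
/-!
Pairing with dual vectors does all the work. Since `(f ⊗ g)(s)₊ = g ∘ s₊ ∘ f*` and `s ↦ s₊` is
injective, (1) is (2) read through `₊`. For symmetric `S` one has `⟨S₊(f* x), y⟩ = ⟨x, f(S₊ y)⟩`, and
with the antisymmetry of the bracket (resp. the commutativity of the product) the value of the
left-hand side of (3) at `a` is minus the pairing of the left-hand side of (2) with `y`.
-/

open TensorProduct

section Preamble

variable {k A : Type*} [Field k] [AddCommGroup A] [Module k A]

/-- The Poisson algebra axioms for a pair of bilinear operations `br` (the Lie bracket)
and `mul` (the commutative associative product), including the Leibniz compatibility. -/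
structure IsPoisson {k A : Type*} [Field k] [AddCommGroup A] [Module k A]
    (br mul : A →ₗ[k] A →ₗ[k] A) : Prop where
  antisymm : ∀ a b, br a b = - br b a
  jacobi : ∀ a b c, br a (br b c) = br (br a b) c + br b (br a c)
  comm : ∀ a b, mul a b = mul b a
  assoc : ∀ a b c, mul (mul a b) c = mul a (mul b c)
  leibniz : ∀ a b c, br a (mul b c) = mul (br a b) c + mul b (br a c)

/-- `r ↦ r₊`, where `⟨r₊(x*), y*⟩ = ⟨r, x* ⊗ y*⟩`. -/
noncomputable def rPlus : (A ⊗[k] A) →ₗ[k] Module.Dual k A →ₗ[k] A :=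
  TensorProduct.lift <| LinearMap.mk₂ k
    (fun a b => (Module.Dual.eval k A a).smulRight b)
    (fun a a' b => by ext f; simp [add_smul])
    (fun c a b => by ext f; simp [smul_smul])
    (fun a b b' => by ext f; simp)
    (fun c a b => by ext f; simp [smul_smul, mul_comm])

/-- The flip `τ : A ⊗ A → A ⊗ A`. -/
noncomputable def tauT : (A ⊗[k] A) →ₗ[k] A ⊗[k] A := (TensorProduct.comm k A A).toLinearMap

/-- `r ↦ r₋`, where `⟨r₊(x*), y*⟩ = ⟨r, x* ⊗ y*⟩ = −⟨x*, r₋(y*)⟩`. -/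
noncomputable def rMinus : (A ⊗[k] A) →ₗ[k] Module.Dual k A →ₗ[k] A :=
  - (rPlus ∘ₗ tauT)

@[simp] lemma rPlus_tmul (a b : A) (f : Module.Dual k A) :
    rPlus (a ⊗ₜ[k] b) f = f a • b := rfl

@[simp] lemma dualMap_add_apply (f g : A →ₗ[k] A) (y : Module.Dual k A) :
    (f + g).dualMap y = f.dualMap y + g.dualMap y := by ext a; simp

@[simp] lemma dualMap_smul_apply (c : k) (f : A →ₗ[k] A) (y : Module.Dual k A) :
    (c • f).dualMap y = c • f.dualMap y := by ext a; simp

@[simp] lemma dualMap_neg_apply (f : A →ₗ[k] A) (y : Module.Dual k A) :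
    (-f).dualMap y = - f.dualMap y := by ext a; simp

noncomputable def T1213 (m : A →ₗ[k] A →ₗ[k] A) :
    (A ⊗[k] A) ⊗[k] (A ⊗[k] A) →ₗ[k] A ⊗[k] (A ⊗[k] A) :=
  (TensorProduct.map (TensorProduct.lift m) LinearMap.id) ∘ₗ
    (TensorProduct.tensorTensorTensorComm k A A A A).toLinearMap

noncomputable def T1323 (m : A →ₗ[k] A →ₗ[k] A) :
    (A ⊗[k] A) ⊗[k] (A ⊗[k] A) →ₗ[k] A ⊗[k] (A ⊗[k] A) :=
  (TensorProduct.assoc k A A A).toLinearMap ∘ₗ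
    (TensorProduct.map LinearMap.id (TensorProduct.lift m)) ∘ₗ
    (TensorProduct.tensorTensorTensorComm k A A A A).toLinearMap

noncomputable def T2312 (m : A →ₗ[k] A →ₗ[k] A) :
    (A ⊗[k] A) ⊗[k] (A ⊗[k] A) →ₗ[k] A ⊗[k] (A ⊗[k] A) :=
  (TensorProduct.leftComm k A A A).toLinearMap ∘ₗ
    (TensorProduct.map (TensorProduct.lift m ∘ₗ (TensorProduct.comm k A A).toLinearMap)
      LinearMap.id) ∘ₗ
    (TensorProduct.tensorTensorTensorComm k A A A A).toLinearMap ∘ₗ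
    (TensorProduct.map (TensorProduct.comm k A A).toLinearMap LinearMap.id)

noncomputable def T1223 (m : A →ₗ[k] A →ₗ[k] A) :
    (A ⊗[k] A) ⊗[k] (A ⊗[k] A) →ₗ[k] A ⊗[k] (A ⊗[k] A) :=
  (TensorProduct.leftComm k A A A).toLinearMap ∘ₗ
    (TensorProduct.map (TensorProduct.lift m) LinearMap.id) ∘ₗ
    (TensorProduct.tensorTensorTensorComm k A A A A).toLinearMap ∘ₗ
    (TensorProduct.map (TensorProduct.comm k A A).toLinearMap LinearMap.id)

/-- `C(r) = [r₁₂,r₁₃] + [r₁₃,r₂₃] + [r₁₂,r₂₃]` for the bracket `br`. -/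
noncomputable def cybe (br : A →ₗ[k] A →ₗ[k] A) (r : A ⊗[k] A) : A ⊗[k] (A ⊗[k] A) :=
  T1213 br (r ⊗ₜ[k] r) + T1323 br (r ⊗ₜ[k] r) + T1223 br (r ⊗ₜ[k] r)

/-- `A(r) = r₁₂·r₁₃ + r₁₃·r₂₃ − r₂₃·r₁₂` for the product `mul`. -/
noncomputable def aybe (mul : A →ₗ[k] A →ₗ[k] A) (r : A ⊗[k] A) : A ⊗[k] (A ⊗[k] A) :=
  T1213 mul (r ⊗ₜ[k] r) + T1323 mul (r ⊗ₜ[k] r) - T2312 mul (r ⊗ₜ[k] r)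

/-- `r` is a solution of the Poisson Yang–Baxter equation: `C(r) = 0` and `A(r) = 0`. -/
def IsPYBESolution (br mul : A →ₗ[k] A →ₗ[k] A) (r : A ⊗[k] A) : Prop :=
  cybe br r = 0 ∧ aybe mul r = 0

variable (k A) in
/-- `σ₁₃ : a ⊗ b ⊗ c ↦ c ⊗ b ⊗ a`. -/
noncomputable def sigma13 : A ⊗[k] (A ⊗[k] A) →ₗ[k] A ⊗[k] (A ⊗[k] A) :=
  (TensorProduct.map LinearMap.id (TensorProduct.comm k A A).toLinearMap) ∘ₗ
    (TensorProduct.leftComm k A A A).toLinearMap ∘ₗ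
    (TensorProduct.map LinearMap.id (TensorProduct.comm k A A).toLinearMap)

/-- `s ∈ A ⊗ A` is `(ad, L)`-invariant:
`(ad(a)⊗id + id⊗ad(a))(s) = 0` and `(L(a)⊗id − id⊗L(a))(s) = 0` for all `a`. -/
def IsAdLInvariant (br mul : A →ₗ[k] A →ₗ[k] A) (s : A ⊗[k] A) : Prop :=
  ∀ a : A,
    TensorProduct.map (br a) LinearMap.id s + TensorProduct.map LinearMap.id (br a) s = 0 ∧
    TensorProduct.map (mul a) LinearMap.id s - TensorProduct.map LinearMap.id (mul a) s = 0

/-- The bracket `[x*,y*]_r = −ad*(r₊(x*))y* + ad*(r₋(y*))x*` on the dual space. -/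
noncomputable def dualBr (br : A →ₗ[k] A →ₗ[k] A) (r : A ⊗[k] A) :
    Module.Dual k A →ₗ[k] Module.Dual k A →ₗ[k] Module.Dual k A :=
  LinearMap.mk₂ k
    (fun x y => - (br (rPlus r x)).dualMap y + (br (rMinus r y)).dualMap x)
    (fun x x' y => by simp [map_add]; try abel)
    (fun c x y => by simp [map_smul, smul_add]; try abel)
    (fun x y y' => by simp [map_add]; try abel)
    (fun c x y => by simp [map_smul, smul_add]; try abel)

/-- The product `x*·_r y* = L*(r₊(x*))y* + L*(r₋(y*))x*` on the dual space. -/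
noncomputable def dualMul (mul : A →ₗ[k] A →ₗ[k] A) (r : A ⊗[k] A) :
    Module.Dual k A →ₗ[k] Module.Dual k A →ₗ[k] Module.Dual k A :=
  LinearMap.mk₂ k
    (fun x y => (mul (rPlus r x)).dualMap y + (mul (rMinus r y)).dualMap x)
    (fun x x' y => by simp [map_add]; try abel)
    (fun c x y => by simp [map_smul, smul_add]; try abel)
    (fun x y y' => by simp [map_add]; try abel)
    (fun c x y => by simp [map_smul, smul_add]; try abel)

/-- The descendent operation `a ∘_P b = (P a) ∘ b + a ∘ (P b) + λ a ∘ b`. -/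
noncomputable def descOp (m : A →ₗ[k] A →ₗ[k] A) (lam : k) (P : A →ₗ[k] A) :
    A →ₗ[k] A →ₗ[k] A :=
  LinearMap.mk₂ k
    (fun a b => m (P a) b + m a (P b) + lam • m a b)
    (fun a a' b => by simp [map_add, smul_add]; try abel)
    (fun c a b => by simp [map_smul, smul_add, smul_smul, mul_comm]; try abel)
    (fun a b b' => by simp [map_add, smul_add]; try abel)
    (fun c a b => by simp [map_smul, smul_add, smul_smul, mul_comm]; try abel)

/-- `P` is a Rota–Baxter operator of weight `λ` on the Poisson algebra `(A, br, mul)`. -/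
def IsRotaBaxter (br mul : A →ₗ[k] A →ₗ[k] A) (lam : k) (P : A →ₗ[k] A) : Prop :=
  (∀ a b, br (P a) (P b) = P (br (P a) b + br a (P b) + lam • br a b)) ∧
  (∀ a b, mul (P a) (P b) = P (mul (P a) b + mul a (P b) + lam • mul a b))

/-- `((A, br, mul), B, P)` is a quadratic Rota–Baxter Poisson algebra of weight `λ`. -/
structure IsQuadraticRotaBaxter {k A : Type*} [Field k] [AddCommGroup A] [Module k A]
    (br mul : A →ₗ[k] A →ₗ[k] A) (B : A →ₗ[k] A →ₗ[k] k) (lam : k) (P : A →ₗ[k] A) :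
    Prop where
  poisson : IsPoisson br mul
  symm : ∀ a b, B a b = B b a
  nondeg : ∀ a, (∀ b, B a b = 0) → a = 0
  br_invariant : ∀ a b c, B (br a b) c = B a (br b c)
  mul_invariant : ∀ a b c, B (mul a b) c = B a (mul b c)
  rb : IsRotaBaxter br mul lam P
  compat : ∀ a b, B a (P b) + B (P a) b + lam • B a b = 0

/-- The semidirect-product bracket on `A ⊕ A*`:
`[(a,x*),(b,y*)] = ([a,b], −ad*(a)y* + ad*(b)x*)`. -/
noncomputable def sdBr (br : A →ₗ[k] A →ₗ[k] A) :
    (A × Module.Dual k A) →ₗ[k] (A × Module.Dual k A) →ₗ[k] (A × Module.Dual k A) :=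
  LinearMap.mk₂ k
    (fun p q => (br p.1 q.1, - (br p.1).dualMap q.2 + (br q.1).dualMap p.2))
    (fun p p' q => by simp [Prod.ext_iff, map_add]; try abel)
    (fun c p q => by simp [Prod.ext_iff, map_smul, smul_add]; try abel)
    (fun p q q' => by simp [Prod.ext_iff, map_add]; try abel)
    (fun c p q => by simp [Prod.ext_iff, map_smul, smul_add]; try abel)

/-- The semidirect-product multiplication on `A ⊕ A*`:
`(a,x*)·(b,y*) = (a·b, L*(a)y* + L*(b)x*)`. -/
noncomputable def sdMul (mul : A →ₗ[k] A →ₗ[k] A) :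
    (A × Module.Dual k A) →ₗ[k] (A × Module.Dual k A) →ₗ[k] (A × Module.Dual k A) :=
  LinearMap.mk₂ k
    (fun p q => (mul p.1 q.1, (mul p.1).dualMap q.2 + (mul q.1).dualMap p.2))
    (fun p p' q => by simp [Prod.ext_iff, map_add]; try abel)
    (fun c p q => by simp [Prod.ext_iff, map_smul, smul_add]; try abel)
    (fun p q q' => by simp [Prod.ext_iff, map_add]; try abel)
    (fun c p q => by simp [Prod.ext_iff, map_smul, smul_add]; try abel)

/-- The canonical bilinear form `𝔅_d((a,x*),(b,y*)) = ⟨a,y*⟩ + ⟨b,x*⟩` on `A ⊕ A*`. -/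
noncomputable def sdForm :
    (A × Module.Dual k A) →ₗ[k] (A × Module.Dual k A) →ₗ[k] k :=
  LinearMap.mk₂ k
    (fun p q => q.2 p.1 + p.2 q.1)
    (fun p p' q => by simp; try ring)
    (fun c p q => by simp [smul_add, smul_smul]; try ring)
    (fun p q q' => by simp; try ring)
    (fun c p q => by simp [smul_add, smul_smul]; try ring)

end Preamble

section RPlus

variable {k A : Type*} [Field k] [AddCommGroup A] [Module k A]

lemma rPlus_map (f g : A →ₗ[k] A) (s : A ⊗[k] A) (x : Module.Dual k A) :
    rPlus (TensorProduct.map f g s) x = g (rPlus s (f.dualMap x)) := by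
  induction s using TensorProduct.induction_on with
  | zero => simp
  | tmul a b => simp
  | add s t hs ht => simp [map_add, hs, ht]

lemma apply_rPlus_tauT (s : A ⊗[k] A) (x y : Module.Dual k A) :
    y (rPlus (tauT s) x) = x (rPlus s y) := by
  induction s using TensorProduct.induction_on with
  | zero => simp
  | tmul a b => simp [tauT, mul_comm]
  | add s t hs ht => simp [map_add, hs, ht]

lemma Module.Basis.tensorProduct_repr_eq_coord_rPlus {ι : Type*} (b : Module.Basis ι k A)
    (s : A ⊗[k] A) (i j : ι) :
    (b.tensorProduct b).repr s (i, j) = b.coord j (rPlus s (b.coord i)) := by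
  induction s using TensorProduct.induction_on with
  | zero => simp
  | tmul a c => simp [Module.Basis.tensorProduct_repr_tmul_apply, mul_comm]
  | add s t hs ht => simp [map_add, hs, ht]

lemma rPlus_injective : Function.Injective (rPlus : A ⊗[k] A →ₗ[k] Module.Dual k A →ₗ[k] A) := by
  classical
  let b := Module.Basis.ofVectorSpace k A
  refine (injective_iff_map_eq_zero _).2 fun s hs => (b.tensorProduct b).ext_elem ?_
  rintro ⟨i, j⟩
  simp [b.tensorProduct_repr_eq_coord_rPlus, hs]

lemma apply_rPlus_dualMap {s : A ⊗[k] A} (hs : tauT s = s) (f : A →ₗ[k] A)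
    (x y : Module.Dual k A) : y (rPlus s (f.dualMap x)) = x (f (rPlus s y)) := by
  rw [← hs, apply_rPlus_tauT, hs, LinearMap.dualMap_apply]

end RPlus

section Invariance

variable {k A : Type*} [Field k] [AddCommGroup A] [Module k A] (br mul : A →ₗ[k] A →ₗ[k] A)

theorem isAdLInvariant_iff_forall_rPlus (s : A ⊗[k] A) :
    IsAdLInvariant br mul s ↔ ∀ (a : A) (x : Module.Dual k A),
      rPlus s ((br a).dualMap x) + br a (rPlus s x) = 0 ∧
      rPlus s ((mul a).dualMap x) - mul a (rPlus s x) = 0 := by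
  refine forall_congr' fun a => ?_
  simp only [← map_eq_zero_iff _ rPlus_injective, LinearMap.ext_iff, map_add, map_sub,
    LinearMap.add_apply, LinearMap.sub_apply, rPlus_map, LinearMap.dualMap_id,
    LinearMap.id_apply, LinearMap.zero_apply, forall_and]

variable {br mul} {s : A ⊗[k] A}

theorem forall_rPlus_ad_iff (hs : tauT s = s) (hbr : ∀ a b, br a b = - br b a) :
    (∀ (a : A) (x : Module.Dual k A), rPlus s ((br a).dualMap x) + br a (rPlus s x) = 0) ↔
      ∀ x y : Module.Dual k A,
        (br (rPlus s x)).dualMap y + (br (rPlus s y)).dualMap x = 0 := by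
  have pairing : ∀ (x y : Module.Dual k A) (a : A),
      ((br (rPlus s x)).dualMap y + (br (rPlus s y)).dualMap x) a =
        - y (rPlus s ((br a).dualMap x) + br a (rPlus s x)) := fun x y a => by
    simp only [LinearMap.add_apply, LinearMap.dualMap_apply, map_add, apply_rPlus_dualMap hs,
      hbr _ a, map_neg]
    abel
  refine ⟨fun h x y => LinearMap.ext fun a => ?_, fun h a x => ?_⟩
  · rw [pairing, h, map_zero, neg_zero, LinearMap.zero_apply]
  · refine (Module.forall_dual_apply_eq_zero_iff k _).1 fun y => ?_
    rw [← neg_eq_zero, ← pairing, h, LinearMap.zero_apply]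

theorem forall_rPlus_mul_iff (hs : tauT s = s) (hmul : ∀ a b, mul a b = mul b a) :
    (∀ (a : A) (x : Module.Dual k A), rPlus s ((mul a).dualMap x) - mul a (rPlus s x) = 0) ↔
      ∀ x y : Module.Dual k A,
        (mul (rPlus s x)).dualMap y - (mul (rPlus s y)).dualMap x = 0 := by
  have pairing : ∀ (x y : Module.Dual k A) (a : A),
      ((mul (rPlus s x)).dualMap y - (mul (rPlus s y)).dualMap x) a =
        - y (rPlus s ((mul a).dualMap x) - mul a (rPlus s x)) := fun x y a => by
    simp only [LinearMap.sub_apply, LinearMap.dualMap_apply, map_sub, apply_rPlus_dualMap hs,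
      hmul _ a]
    abel
  refine ⟨fun h x y => LinearMap.ext fun a => ?_, fun h a x => ?_⟩
  · rw [pairing, h, map_zero, neg_zero, LinearMap.zero_apply]
  · refine (Module.forall_dual_apply_eq_zero_iff k _).1 fun y => ?_
    rw [← neg_eq_zero, ← pairing, h, LinearMap.zero_apply]

end Invariance

theorem statement2_general {k A : Type*} [Field k] [AddCommGroup A] [Module k A]
    (br mul : A →ₗ[k] A →ₗ[k] A) (hP : IsPoisson br mul)
    (S : A ⊗[k] A) (hS : tauT S = S) :
    (IsAdLInvariant br mul S ↔
      (∀ (a : A) (x : Module.Dual k A),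
        rPlus S ((br a).dualMap x) + br a (rPlus S x) = 0 ∧
        rPlus S ((mul a).dualMap x) - mul a (rPlus S x) = 0)) ∧
    (IsAdLInvariant br mul S ↔
      (∀ x y : Module.Dual k A,
        (br (rPlus S x)).dualMap y + (br (rPlus S y)).dualMap x = 0 ∧
        (mul (rPlus S x)).dualMap y - (mul (rPlus S y)).dualMap x = 0)) := by
  refine ⟨isAdLInvariant_iff_forall_rPlus br mul S, ?_⟩
  rw [isAdLInvariant_iff_forall_rPlus]
  simp only [forall_and]
  exact and_congr (forall_rPlus_ad_iff hS hP.antisymm) (forall_rPlus_mul_iff hS hP.comm)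

/-- equivalent characterizations of the `(ad, L)`-invariance of the symmetric
part `S` of `r ∈ A ⊗ A`. -/
theorem statement2 {k A : Type*} [Field k] [AddCommGroup A] [Module k A]
    [FiniteDimensional k A]
    (br mul : A →ₗ[k] A →ₗ[k] A) (hP : IsPoisson br mul)
    (r S Lam : A ⊗[k] A) (hdec : r = S + Lam) (hS : tauT S = S) (hLam : tauT Lam = - Lam) :
    (IsAdLInvariant br mul S ↔
      (∀ (a : A) (x : Module.Dual k A),
        rPlus S ((br a).dualMap x) + br a (rPlus S x) = 0 ∧
        rPlus S ((mul a).dualMap x) - mul a (rPlus S x) = 0)) ∧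
    (IsAdLInvariant br mul S ↔
      (∀ x y : Module.Dual k A,
        (br (rPlus S x)).dualMap y + (br (rPlus S y)).dualMap x = 0 ∧
        (mul (rPlus S x)).dualMap y - (mul (rPlus S y)).dualMap x = 0)) :=
  statement2_general br mul hP S hS
end

section
/- Let (A,[·,·],·) be a finite-dimensional Poisson algebra over a field and r ∈ A⊗A with symmetric part S, and suppose S is (ad,L)-invariant. Define [x*,y*]_r = −ad*(r₊(x*))y* + ad*(r₋(y*))x* and x*·_r y* = L*(r₊(x*))y* + L*(r₋(y*))x* on A*. Then r is a solution of the Poisson Yang–Baxter equation in (A,[·,·],·) if and only if (A*,[·,·]_r,·_r) is a Poisson algebra and both r₊ and r₋ are Poisson algebra homomorphisms from (A*,[·,·]_r,·_r) to (A,[·,·],·). -/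
open TensorProduct

/-
Write `r₊, r₋` for `rPlus r, rMinus r` and `s = r + τ r = 2S`, so that `r₊ - r₋ = s₊`.
Paired with `x ⊗ y ⊗ z`, `C(r)` and `A(r)` become `⟨z, [r₊x, r₊y] - r₊[x,y]_r⟩` and
`⟨z, r₊x · r₊y - r₊(x ·_r y)⟩`, so `r` solves the Poisson Yang–Baxter equation exactly when `r₊`
is a homomorphism. Invariance of `s` says that `s₊` intertwines the coadjoint actions of `A` on
`A*` with `ad` and `L`; hence the homomorphism defects of `r₋` and `r₊` coincide, and the dual
operations are antisymmetric resp. commutative. With `r₊` and `r₋` both homomorphisms, Jacobi,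
associativity and Leibniz on `A*` reduce to the same identities in `A`, up to terms that cancel
again by invariance of `s`.
-/

open Module

section DualDistrib

variable {R M N P : Type*} [CommRing R] [AddCommGroup M] [Module R M] [Module.Free R M]
  [Module.Finite R M] [AddCommGroup N] [Module R N] [Module.Free R N] [Module.Finite R N]
  [AddCommGroup P] [Module R P]

theorem TensorProduct.ext_dualDistrib {ψ₁ ψ₂ : Dual R (M ⊗[R] N) →ₗ[R] P}
    (h : ∀ f g, ψ₁ (dualDistrib R M N (f ⊗ₜ g)) = ψ₂ (dualDistrib R M N (f ⊗ₜ g))) :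
    ψ₁ = ψ₂ := by
  have : ψ₁ ∘ₗ (dualDistribEquiv R M N).toLinearMap = ψ₂ ∘ₗ (dualDistribEquiv R M N).toLinearMap :=
    TensorProduct.ext' h
  simpa using congrArg (· ∘ₗ (dualDistribEquiv R M N).symm.toLinearMap) this

end DualDistrib

section Pairing

variable {k A : Type*} [Field k] [AddCommGroup A] [Module k A]

noncomputable def dualTmul₃ (x y z : Dual k A) : Dual k (A ⊗[k] (A ⊗[k] A)) :=
  dualDistrib k A (A ⊗[k] A) (x ⊗ₜ dualDistrib k A A (y ⊗ₜ z))

@[simp] lemma dualTmul₃_tmul (x y z : Dual k A) (a b c : A) :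
    dualTmul₃ x y z (a ⊗ₜ (b ⊗ₜ c)) = x a * (y b * z c) := by
  simp [dualTmul₃]

lemma eq_zero_of_forall_dualTmul₃_eq_zero [FiniteDimensional k A] (t : A ⊗[k] (A ⊗[k] A))
    (h : ∀ x y z : Dual k A, dualTmul₃ x y z t = 0) : t = 0 := by
  refine Module.eval_apply_injective k (V := A ⊗[k] (A ⊗[k] A)) ?_
  rw [map_zero]
  refine TensorProduct.ext_dualDistrib fun x w => ?_
  have hx : Dual.eval k _ t ∘ₗ dualDistrib k A (A ⊗[k] A) ∘ₗ TensorProduct.mk k _ _ x = 0 :=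
    TensorProduct.ext_dualDistrib fun y z => h x y z
  simpa using LinearMap.congr_fun hx w

end Pairing

section RMatrix

variable {k A : Type*} [Field k] [AddCommGroup A] [Module k A]

@[simp] lemma rMinus_tmul (a b : A) (f : Dual k A) :
    rMinus (a ⊗ₜ[k] b) f = -(f b • a) := rfl

lemma tauT_tauT (u : A ⊗[k] A) : tauT (tauT u) = u := by
  simp [tauT]

lemma tauT_add_self (r : A ⊗[k] A) : tauT (r + tauT r) = r + tauT r := by
  rw [map_add, tauT_tauT, add_comm]

lemma apply_rPlus (u : A ⊗[k] A) (x y : Dual k A) :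
    y (rPlus u x) = dualDistrib k A A (x ⊗ₜ y) u := by
  induction u using TensorProduct.induction_on with
  | zero => simp
  | tmul a b => simp
  | add u v hu hv => simp [hu, hv]

lemma apply_rMinus (u : A ⊗[k] A) (x y : Dual k A) :
    y (rMinus u x) = -x (rPlus u y) := by
  induction u using TensorProduct.induction_on with
  | zero => simp
  | tmul a b => simp [mul_comm]
  | add u v hu hv => simp [hu, hv]; ring

lemma apply_rPlus_dualMap_s5 (u : A ⊗[k] A) (f : A →ₗ[k] A) (w z : Dual k A) :
    z (rPlus u (f.dualMap w)) = -w (f (rMinus u z)) := by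
  rw [← LinearMap.dualMap_apply f w, apply_rMinus, neg_neg]

lemma dualDistrib_map (f g : A →ₗ[k] A) (x y : Dual k A) (u : A ⊗[k] A) :
    dualDistrib k A A (x ⊗ₜ y) (TensorProduct.map f g u) =
      dualDistrib k A A (f.dualMap x ⊗ₜ g.dualMap y) u := by
  induction u using TensorProduct.induction_on with
  | zero => simp
  | tmul a b => simp
  | add u v hu hv => simp [hu, hv]

lemma rPlus_sub_rMinus (r : A ⊗[k] A) (x : Dual k A) :
    rPlus r x - rMinus r x = rPlus (r + tauT r) x := by
  simp [rMinus]

lemma rMinus_eq_rPlus_sub (r : A ⊗[k] A) (x : Dual k A) :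
    rMinus r x = rPlus r x - rPlus (r + tauT r) x := by
  rw [← rPlus_sub_rMinus, sub_sub_cancel]

end RMatrix

section Invariant

variable {k A : Type*} [Field k] [AddCommGroup A] [Module k A]
  {br mul : A →ₗ[k] A →ₗ[k] A} {s : A ⊗[k] A}

lemma IsAdLInvariant.add {t : A ⊗[k] A} (hs : IsAdLInvariant br mul s)
    (ht : IsAdLInvariant br mul t) : IsAdLInvariant br mul (s + t) := fun a => by
  obtain ⟨hs₁, hs₂⟩ := hs a
  obtain ⟨ht₁, ht₂⟩ := ht a
  simp only [map_add]
  constructor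
  · rw [add_add_add_comm, hs₁, ht₁, add_zero]
  · rw [add_sub_add_comm, hs₂, ht₂, add_zero]

lemma rPlus_dualMap_br (hinv : IsAdLInvariant br mul s) (a : A) (x : Dual k A) :
    rPlus s ((br a).dualMap x) = -br a (rPlus s x) := by
  refine Module.eval_apply_injective k (LinearMap.ext fun w => ?_)
  have h := congrArg (dualDistrib k A A (x ⊗ₜ w)) (hinv a).1
  rw [map_add, map_zero, dualDistrib_map, dualDistrib_map, ← apply_rPlus, ← apply_rPlus] at h
  simpa [eq_neg_iff_add_eq_zero] using h

lemma rPlus_dualMap_mul (hinv : IsAdLInvariant br mul s) (a : A) (x : Dual k A) :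
    rPlus s ((mul a).dualMap x) = mul a (rPlus s x) := by
  refine Module.eval_apply_injective k (LinearMap.ext fun w => ?_)
  have h := congrArg (dualDistrib k A A (x ⊗ₜ w)) (hinv a).2
  rw [map_sub, map_zero, dualDistrib_map, dualDistrib_map, ← apply_rPlus, ← apply_rPlus] at h
  simpa [sub_eq_zero] using h

lemma apply_rPlus_comm (hs : tauT s = s) (x y : Dual k A) :
    y (rPlus s x) = x (rPlus s y) := by
  have h : rMinus s x = -rPlus s x := by simp [rMinus, hs]
  simpa [h] using apply_rMinus s x y

lemma apply_br_rPlus_add (hP : IsPoisson br mul) (hs : tauT s = s)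
    (hinv : IsAdLInvariant br mul s) (x y : Dual k A) (b : A) :
    y (br (rPlus s x) b) + x (br (rPlus s y) b) = 0 := by
  have h := congrArg y (rPlus_dualMap_br hinv b x)
  rw [apply_rPlus_comm hs, LinearMap.dualMap_apply, hP.antisymm b (rPlus s y),
    hP.antisymm b (rPlus s x)] at h
  simp only [map_neg, neg_neg] at h
  linear_combination -h

lemma apply_mul_rPlus_comm (hP : IsPoisson br mul) (hs : tauT s = s)
    (hinv : IsAdLInvariant br mul s) (x y : Dual k A) (b : A) :
    y (mul (rPlus s x) b) = x (mul (rPlus s y) b) := by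
  have h := congrArg y (rPlus_dualMap_mul hinv b x)
  rw [apply_rPlus_comm hs, LinearMap.dualMap_apply, hP.comm b, hP.comm b] at h
  exact h.symm

lemma apply_br_br_rPlus_add (hP : IsPoisson br mul) (hs : tauT s = s)
    (hinv : IsAdLInvariant br mul s) (x y : Dual k A) (c b : A) :
    y (br (br (rPlus s x) c) b) + x (br c (br (rPlus s y) b)) = 0 := by
  have h := apply_br_rPlus_add hP hs hinv ((br c).dualMap x) y b
  rwa [rPlus_dualMap_br hinv, ← hP.antisymm] at h

lemma apply_mul_br_rPlus_comm (hP : IsPoisson br mul) (hs : tauT s = s)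
    (hinv : IsAdLInvariant br mul s) (x y : Dual k A) (c b : A) :
    y (mul (br (rPlus s x) c) b) = x (br c (mul (rPlus s y) b)) := by
  have h := apply_mul_rPlus_comm hP hs hinv ((br c).dualMap x) y b
  rwa [rPlus_dualMap_br hinv, ← hP.antisymm] at h

end Invariant

section YangBaxter

variable {k A : Type*} [Field k] [AddCommGroup A] [Module k A]

lemma dualTmul₃_T1213 (m : A →ₗ[k] A →ₗ[k] A) (u v : A ⊗[k] A) (x y z : Dual k A) :
    dualTmul₃ x y z (T1213 m (u ⊗ₜ v)) = x (m (rMinus u y) (rMinus v z)) := by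
  induction u using TensorProduct.induction_on with
  | zero => simp
  | add u₁ u₂ h₁ h₂ => simp [add_tmul, h₁, h₂]
  | tmul a b =>
    induction v using TensorProduct.induction_on with
    | zero => simp
    | add v₁ v₂ h₁ h₂ => simp [tmul_add, h₁, h₂]; ring
    | tmul c d => simp [T1213]; ring

lemma dualTmul₃_T1323 (m : A →ₗ[k] A →ₗ[k] A) (u v : A ⊗[k] A) (x y z : Dual k A) :
    dualTmul₃ x y z (T1323 m (u ⊗ₜ v)) = z (m (rPlus u x) (rPlus v y)) := by
  induction u using TensorProduct.induction_on with
  | zero => simp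
  | add u₁ u₂ h₁ h₂ => simp [add_tmul, h₁, h₂]
  | tmul a b =>
    induction v using TensorProduct.induction_on with
    | zero => simp
    | add v₁ v₂ h₁ h₂ => simp [tmul_add, h₁, h₂]
    | tmul c d => simp [T1323, mul_left_comm]

lemma dualTmul₃_T1223 (m : A →ₗ[k] A →ₗ[k] A) (u v : A ⊗[k] A) (x y z : Dual k A) :
    dualTmul₃ x y z (T1223 m (u ⊗ₜ v)) = -y (m (rPlus u x) (rMinus v z)) := by
  induction u using TensorProduct.induction_on with
  | zero => simp
  | add u₁ u₂ h₁ h₂ => simp [add_tmul, h₁, h₂]; ring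
  | tmul a b =>
    induction v using TensorProduct.induction_on with
    | zero => simp
    | add v₁ v₂ h₁ h₂ => simp [tmul_add, h₁, h₂]; ring
    | tmul c d => simp [T1223, mul_comm]

lemma dualTmul₃_T2312 (m : A →ₗ[k] A →ₗ[k] A) (u v : A ⊗[k] A) (x y z : Dual k A) :
    dualTmul₃ x y z (T2312 m (u ⊗ₜ v)) = -y (m (rMinus v z) (rPlus u x)) := by
  induction u using TensorProduct.induction_on with
  | zero => simp
  | add u₁ u₂ h₁ h₂ => simp [add_tmul, h₁, h₂]; ring
  | tmul a b =>
    induction v using TensorProduct.induction_on with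
    | zero => simp
    | add v₁ v₂ h₁ h₂ => simp [tmul_add, h₁, h₂]; ring
    | tmul c d => simp [T2312, mul_comm]

lemma dualTmul₃_cybe (br : A →ₗ[k] A →ₗ[k] A) (r : A ⊗[k] A) (x y z : Dual k A) :
    dualTmul₃ x y z (cybe br r) =
      z (br (rPlus r x) (rPlus r y) - rPlus r (dualBr br r x y)) := by
  simp [cybe, dualTmul₃_T1213, dualTmul₃_T1323, dualTmul₃_T1223, dualBr, apply_rPlus_dualMap_s5]
  ring

lemma dualTmul₃_aybe {br mul : A →ₗ[k] A →ₗ[k] A} (hP : IsPoisson br mul) (r : A ⊗[k] A)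
    (x y z : Dual k A) :
    dualTmul₃ x y z (aybe mul r) =
      z (mul (rPlus r x) (rPlus r y) - rPlus r (dualMul mul r x y)) := by
  simp [aybe, dualTmul₃_T1213, dualTmul₃_T1323, dualTmul₃_T2312, dualMul, apply_rPlus_dualMap_s5,
    hP.comm (rMinus r z)]
  ring

lemma isPYBESolution_iff [FiniteDimensional k A] {br mul : A →ₗ[k] A →ₗ[k] A}
    (hP : IsPoisson br mul) (r : A ⊗[k] A) :
    IsPYBESolution br mul r ↔
      (∀ x y, rPlus r (dualBr br r x y) = br (rPlus r x) (rPlus r y)) ∧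
      (∀ x y, rPlus r (dualMul mul r x y) = mul (rPlus r x) (rPlus r y)) := by
  have hsep : ∀ a b : A, (∀ z : Dual k A, z (a - b) = 0) ↔ b = a := fun a b => by
    rw [Module.forall_dual_apply_eq_zero_iff, sub_eq_zero, eq_comm]
  have hzero : ∀ t : A ⊗[k] (A ⊗[k] A), t = 0 ↔ ∀ x y z : Dual k A, dualTmul₃ x y z t = 0 :=
    fun t => ⟨fun ht => by simp [ht], eq_zero_of_forall_dualTmul₃_eq_zero t⟩
  simp only [IsPYBESolution, hzero, dualTmul₃_cybe, dualTmul₃_aybe hP, hsep]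

end YangBaxter

section PoissonIdentities

variable {k A : Type*} [Field k] [AddCommGroup A] [Module k A] {br mul : A →ₗ[k] A →ₗ[k] A}

lemma IsPoisson.mul_left_comm (hP : IsPoisson br mul) (a b c : A) :
    mul a (mul b c) = mul b (mul a c) := by
  rw [← hP.assoc, hP.comm a b, hP.assoc]

lemma IsPoisson.br_mul_left (hP : IsPoisson br mul) (a b c : A) :
    br (mul a b) c = br a (mul b c) + br b (mul a c) := by
  rw [hP.antisymm (mul a b) c, hP.leibniz c, hP.leibniz a, hP.leibniz b, hP.antisymm c a,
    hP.antisymm c b, hP.antisymm b a]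
  simp only [map_neg, LinearMap.neg_apply]
  rw [hP.comm (br a c) b]
  abel

end PoissonIdentities

section DualPoisson

variable {k A : Type*} [Field k] [AddCommGroup A] [Module k A]
  {br mul : A →ₗ[k] A →ₗ[k] A} {r : A ⊗[k] A}

@[simp] lemma dualBr_apply (x y : Dual k A) (b : A) :
    dualBr br r x y b = -y (br (rPlus r x) b) + x (br (rMinus r y) b) := by
  simp [dualBr]

@[simp] lemma dualMul_apply (x y : Dual k A) (b : A) :
    dualMul mul r x y b = y (mul (rPlus r x) b) + x (mul (rMinus r y) b) := by
  simp [dualMul]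

lemma rPlus_dualBr_of_isAdLInvariant {s : A ⊗[k] A} (hinv : IsAdLInvariant br mul s)
    (x y : Dual k A) :
    rPlus s (dualBr br r x y) = br (rPlus r x) (rPlus s y) - br (rMinus r y) (rPlus s x) := by
  simp only [dualBr, LinearMap.mk₂_apply, map_add, map_neg, rPlus_dualMap_br hinv, neg_neg]
  abel

lemma rPlus_dualMul_of_isAdLInvariant {s : A ⊗[k] A} (hinv : IsAdLInvariant br mul s)
    (x y : Dual k A) :
    rPlus s (dualMul mul r x y) = mul (rPlus r x) (rPlus s y) + mul (rMinus r y) (rPlus s x) := by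
  simp only [dualMul, LinearMap.mk₂_apply, map_add, rPlus_dualMap_mul hinv]

lemma rMinus_dualBr_sub_eq_rPlus_dualBr_sub (hP : IsPoisson br mul)
    (hinv : IsAdLInvariant br mul (r + tauT r)) (x y : Dual k A) :
    rMinus r (dualBr br r x y) - br (rMinus r x) (rMinus r y) =
      rPlus r (dualBr br r x y) - br (rPlus r x) (rPlus r y) := by
  rw [rMinus_eq_rPlus_sub r (dualBr br r x y), rPlus_dualBr_of_isAdLInvariant hinv,
    rMinus_eq_rPlus_sub r x, rMinus_eq_rPlus_sub r y]
  simp only [map_sub, LinearMap.sub_apply]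
  rw [hP.antisymm (rPlus r y), hP.antisymm (rPlus (r + tauT r) y)]
  abel

lemma rMinus_dualMul_sub_eq_rPlus_dualMul_sub (hP : IsPoisson br mul)
    (hinv : IsAdLInvariant br mul (r + tauT r)) (x y : Dual k A) :
    rMinus r (dualMul mul r x y) - mul (rMinus r x) (rMinus r y) =
      rPlus r (dualMul mul r x y) - mul (rPlus r x) (rPlus r y) := by
  rw [rMinus_eq_rPlus_sub r (dualMul mul r x y), rPlus_dualMul_of_isAdLInvariant hinv,
    rMinus_eq_rPlus_sub r x, rMinus_eq_rPlus_sub r y]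
  simp only [map_sub, LinearMap.sub_apply]
  rw [hP.comm (rPlus r y), hP.comm (rPlus (r + tauT r) y)]
  abel

lemma dualBr_antisymm (hP : IsPoisson br mul) (hinv : IsAdLInvariant br mul (r + tauT r))
    (x y : Dual k A) : dualBr br r x y = -dualBr br r y x := by
  ext b
  have h := apply_br_rPlus_add hP (tauT_add_self r) hinv x y b
  simp only [← rPlus_sub_rMinus, map_sub, LinearMap.sub_apply] at h
  simp only [dualBr_apply, LinearMap.neg_apply]
  linear_combination -h

lemma dualMul_comm (hP : IsPoisson br mul) (hinv : IsAdLInvariant br mul (r + tauT r))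
    (x y : Dual k A) : dualMul mul r x y = dualMul mul r y x := by
  ext b
  have h := apply_mul_rPlus_comm hP (tauT_add_self r) hinv x y b
  simp only [← rPlus_sub_rMinus, map_sub, LinearMap.sub_apply] at h
  simp only [dualMul_apply]
  linear_combination h

lemma dualBr_jacobi (hP : IsPoisson br mul) (hinv : IsAdLInvariant br mul (r + tauT r))
    (hplus : ∀ x y, rPlus r (dualBr br r x y) = br (rPlus r x) (rPlus r y))
    (hminus : ∀ x y, rMinus r (dualBr br r x y) = br (rMinus r x) (rMinus r y))
    (x y z : Dual k A) :
    dualBr br r x (dualBr br r y z) =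
      dualBr br r (dualBr br r x y) z + dualBr br r y (dualBr br r x z) := by
  ext b
  have jz := congrArg z (hP.jacobi (rPlus r x) (rPlus r y) b)
  have jy := congrArg y (hP.jacobi (rPlus r x) (rMinus r z) b)
  have jx := congrArg x (hP.jacobi (rMinus r y) (rMinus r z) b)
  have h := apply_br_br_rPlus_add hP (tauT_add_self r) hinv x y (rMinus r z) b
  simp only [← rPlus_sub_rMinus, map_sub, LinearMap.sub_apply] at h
  simp only [map_add] at jz jy jx
  simp only [LinearMap.add_apply, dualBr_apply, hplus, hminus]
  linear_combination -jz + jy - jx + h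

lemma dualMul_assoc (hP : IsPoisson br mul)
    (hplus : ∀ x y, rPlus r (dualMul mul r x y) = mul (rPlus r x) (rPlus r y))
    (hminus : ∀ x y, rMinus r (dualMul mul r x y) = mul (rMinus r x) (rMinus r y))
    (x y z : Dual k A) :
    dualMul mul r (dualMul mul r x y) z = dualMul mul r x (dualMul mul r y z) := by
  ext b
  simp only [dualMul_apply, hplus, hminus, hP.assoc, hP.mul_left_comm (rPlus r x)]
  ring

lemma dualBr_leibniz (hP : IsPoisson br mul) (hinv : IsAdLInvariant br mul (r + tauT r))
    (hbr_plus : ∀ x y, rPlus r (dualBr br r x y) = br (rPlus r x) (rPlus r y))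
    (hbr_minus : ∀ x y, rMinus r (dualBr br r x y) = br (rMinus r x) (rMinus r y))
    (hmul_minus : ∀ x y, rMinus r (dualMul mul r x y) = mul (rMinus r x) (rMinus r y))
    (x y z : Dual k A) :
    dualBr br r x (dualMul mul r y z) =
      dualMul mul r (dualBr br r x y) z + dualMul mul r y (dualBr br r x z) := by
  ext b
  have lz := congrArg z (hP.leibniz (rPlus r x) (rPlus r y) b)
  have ly := congrArg y (hP.leibniz (rPlus r x) (rMinus r z) b)
  have lx := congrArg x (hP.br_mul_left (rMinus r y) (rMinus r z) b)
  have h := apply_mul_br_rPlus_comm hP (tauT_add_self r) hinv x y (rMinus r z) b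
  simp only [← rPlus_sub_rMinus, map_sub, LinearMap.sub_apply] at h
  simp only [map_add] at lz ly lx
  simp only [LinearMap.add_apply, dualBr_apply, dualMul_apply, hbr_plus, hbr_minus, hmul_minus]
  linear_combination lz + ly + lx + h

lemma isPoisson_dual (hP : IsPoisson br mul) (hinv : IsAdLInvariant br mul (r + tauT r))
    (hbr_plus : ∀ x y, rPlus r (dualBr br r x y) = br (rPlus r x) (rPlus r y))
    (hmul_plus : ∀ x y, rPlus r (dualMul mul r x y) = mul (rPlus r x) (rPlus r y))
    (hbr_minus : ∀ x y, rMinus r (dualBr br r x y) = br (rMinus r x) (rMinus r y))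
    (hmul_minus : ∀ x y, rMinus r (dualMul mul r x y) = mul (rMinus r x) (rMinus r y)) :
    IsPoisson (dualBr br r) (dualMul mul r) where
  antisymm := dualBr_antisymm hP hinv
  jacobi := dualBr_jacobi hP hinv hbr_plus hbr_minus
  comm := dualMul_comm hP hinv
  assoc := dualMul_assoc hP hmul_plus hmul_minus
  leibniz := dualBr_leibniz hP hinv hbr_plus hbr_minus hmul_minus

end DualPoisson

/-- if the symmetric part of `r` is `(ad, L)`-invariant, then `r` solves the
Poisson Yang–Baxter equation iff `(A*, [,]_r, ·_r)` is a Poisson algebra and both `r₊, r₋`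
are Poisson algebra homomorphisms. -/
theorem statement5 {k A : Type*} [Field k] [AddCommGroup A] [Module k A]
    [FiniteDimensional k A]
    (br mul : A →ₗ[k] A →ₗ[k] A) (hP : IsPoisson br mul)
    (r S Lam : A ⊗[k] A) (hdec : r = S + Lam) (hS : tauT S = S) (hLam : tauT Lam = - Lam)
    (hinv : IsAdLInvariant br mul S) :
    IsPYBESolution br mul r ↔
      (IsPoisson (dualBr br r) (dualMul mul r) ∧
        (∀ x y : Module.Dual k A,
          rPlus r (dualBr br r x y) = br (rPlus r x) (rPlus r y)) ∧
        (∀ x y : Module.Dual k A,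
          rPlus r (dualMul mul r x y) = mul (rPlus r x) (rPlus r y)) ∧
        (∀ x y : Module.Dual k A,
          rMinus r (dualBr br r x y) = br (rMinus r x) (rMinus r y)) ∧
        (∀ x y : Module.Dual k A,
          rMinus r (dualMul mul r x y) = mul (rMinus r x) (rMinus r y))) := by
  have hsym : IsAdLInvariant br mul (r + tauT r) := by
    have h : r + tauT r = S + S := by rw [hdec, map_add, hS, hLam]; abel
    exact h ▸ hinv.add hinv
  rw [isPYBESolution_iff hP]
  constructor
  · rintro ⟨hbr_plus, hmul_plus⟩
    have hbr_minus : ∀ x y, rMinus r (dualBr br r x y) = br (rMinus r x) (rMinus r y) := by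
      intro x y
      rw [← sub_eq_zero, rMinus_dualBr_sub_eq_rPlus_dualBr_sub hP hsym, hbr_plus, sub_self]
    have hmul_minus : ∀ x y, rMinus r (dualMul mul r x y) = mul (rMinus r x) (rMinus r y) := by
      intro x y
      rw [← sub_eq_zero, rMinus_dualMul_sub_eq_rPlus_dualMul_sub hP hsym, hmul_plus, sub_self]
    exact ⟨isPoisson_dual hP hsym hbr_plus hmul_plus hbr_minus hmul_minus,
      hbr_plus, hmul_plus, hbr_minus, hmul_minus⟩
  · rintro ⟨-, hbr_plus, hmul_plus, -, -⟩
    exact ⟨hbr_plus, hmul_plus⟩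
end

section
/- Let (A,[·,·],·) be a finite-dimensional Poisson algebra over a field and r ∈ A⊗A a solution of the Poisson Yang–Baxter equation whose symmetric part is (ad,L)-invariant and such that I_r = r₊ − r₋ is a linear isomorphism (i.e., r gives a factorizable Poisson bialgebra). Then: (i) the image of the map r₊ ⊕ r₋: A* → A ⊕ A, x* ↦ (r₊(x*), r₋(x*)), is a Poisson subalgebra of the direct sum Poisson algebra A ⊕ A; (ii) r₊ ⊕ r₋ is an isomorphism of Poisson algebras from (A*,[·,·]_r,·_r) onto this subalgebra, where [x*,y*]_r = −ad*(r₊(x*))y* + ad*(r₋(y*))x* and x*·_r y* = L*(r₊(x*))y* + L*(r₋(y*))x*; (iii) every a ∈ A has a unique decomposition a = a₊ − a₋ with (a₊, a₋) ∈ Im(r₊ ⊕ r₋), namely a₊ = r₊(I_r⁻¹(a)) and a₋ = r₋(I_r⁻¹(a)). -/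
open TensorProduct

/-!
Pairing the first two legs of `C(r)` and `A(r)` with `x* ⊗ y*` turns the Poisson Yang–Baxter
equation into the identities `r₊[x*,y*]_r = [r₊x*, r₊y*]` and `r₊(x*·_r y*) = r₊x* · r₊y*`.
Since `r₊ − r₋ = I_r = 2 S₊` and the invariance of `S` says that `I_r` intertwines `ad*` with
`−ad` and `L*` with `L`, the map `r₋ = r₊ − I_r` is a homomorphism as well. Injectivity of
`r₊ ⊕ r₋` and the unique decomposition `a = a₊ − a₋` only use that `I_r` is bijective.
-/

section PoissonBialgebra

variable {k A : Type*} [Field k] [AddCommGroup A] [Module k A]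

lemma rMinus_apply (r : A ⊗[k] A) (x : Module.Dual k A) :
    rMinus r x = - rPlus (tauT r) x := by
  simp [rMinus]

lemma rPlus_map_id (f : A →ₗ[k] A) (s : A ⊗[k] A) (x : Module.Dual k A) :
    rPlus (TensorProduct.map f LinearMap.id s) x = rPlus s (f.dualMap x) := by
  induction s using TensorProduct.induction_on with
  | zero => simp
  | tmul a b => simp
  | add s t hs ht => simp [hs, ht]

lemma rPlus_id_map (f : A →ₗ[k] A) (s : A ⊗[k] A) (x : Module.Dual k A) :
    rPlus (TensorProduct.map LinearMap.id f s) x = f (rPlus s x) := by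
  induction s using TensorProduct.induction_on with
  | zero => simp
  | tmul a b => simp
  | add s t hs ht => simp [hs, ht]

@[simp] lemma dualMap_zero_apply (y : Module.Dual k A) :
    (0 : A →ₗ[k] A).dualMap y = 0 := by ext; simp

variable (k A) in
noncomputable def contractTwo (x y : Module.Dual k A) : A ⊗[k] (A ⊗[k] A) →ₗ[k] A :=
  (TensorProduct.lid k A).toLinearMap ∘ₗ
    TensorProduct.map x ((TensorProduct.lid k A).toLinearMap ∘ₗ
      TensorProduct.map y LinearMap.id)

@[simp] lemma contractTwo_tmul (x y : Module.Dual k A) (a b c : A) :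
    contractTwo k A x y (a ⊗ₜ[k] (b ⊗ₜ[k] c)) = (x a * y b) • c := by
  simp [contractTwo, smul_smul, mul_comm]

lemma contractTwo_T1213 (m : A →ₗ[k] A →ₗ[k] A) (x y : Module.Dual k A) (r₁ r₂ : A ⊗[k] A) :
    contractTwo k A x y (T1213 m (r₁ ⊗ₜ[k] r₂)) = - rPlus r₂ ((m (rMinus r₁ y)).dualMap x) := by
  induction r₁ using TensorProduct.induction_on with
  | zero => simp
  | add s t hs ht => simp [add_tmul, hs, ht, add_comm]
  | tmul a b =>
    induction r₂ using TensorProduct.induction_on with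
    | zero => simp
    | add s t hs ht => simp [tmul_add, hs, ht, add_comm]
    | tmul c d => simp [T1213, rMinus, tauT, mul_comm]

lemma contractTwo_T1323 (m : A →ₗ[k] A →ₗ[k] A) (x y : Module.Dual k A) (r₁ r₂ : A ⊗[k] A) :
    contractTwo k A x y (T1323 m (r₁ ⊗ₜ[k] r₂)) = m (rPlus r₁ x) (rPlus r₂ y) := by
  induction r₁ using TensorProduct.induction_on with
  | zero => simp
  | add s t hs ht => simp [add_tmul, hs, ht]
  | tmul a b =>
    induction r₂ using TensorProduct.induction_on with
    | zero => simp
    | add s t hs ht => simp [tmul_add, hs, ht]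
    | tmul c d => simp [T1323, smul_smul, mul_comm]

lemma contractTwo_T1223 (m : A →ₗ[k] A →ₗ[k] A) (x y : Module.Dual k A) (r₁ r₂ : A ⊗[k] A) :
    contractTwo k A x y (T1223 m (r₁ ⊗ₜ[k] r₂)) = rPlus r₂ ((m (rPlus r₁ x)).dualMap y) := by
  induction r₁ using TensorProduct.induction_on with
  | zero => simp
  | add s t hs ht => simp [add_tmul, hs, ht]
  | tmul a b =>
    induction r₂ using TensorProduct.induction_on with
    | zero => simp
    | add s t hs ht => simp [tmul_add, hs, ht]
    | tmul c d => simp [T1223, smul_smul]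

lemma contractTwo_T2312 (m : A →ₗ[k] A →ₗ[k] A) (x y : Module.Dual k A) (r₁ r₂ : A ⊗[k] A) :
    contractTwo k A x y (T2312 m (r₁ ⊗ₜ[k] r₂)) = rPlus r₂ ((m.flip (rPlus r₁ x)).dualMap y) := by
  induction r₁ using TensorProduct.induction_on with
  | zero => simp
  | add s t hs ht => simp [add_tmul, hs, ht]
  | tmul a b =>
    induction r₂ using TensorProduct.induction_on with
    | zero => simp
    | add s t hs ht => simp [tmul_add, hs, ht]
    | tmul c d => simp [T2312, smul_smul]

lemma rPlus_dualBr {br : A →ₗ[k] A →ₗ[k] A} {r : A ⊗[k] A} (hc : cybe br r = 0)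
    (x y : Module.Dual k A) :
    rPlus r (dualBr br r x y) = br (rPlus r x) (rPlus r y) := by
  have h := congrArg (contractTwo k A x y) hc
  simp only [cybe, map_add, contractTwo_T1213, contractTwo_T1323, contractTwo_T1223,
    map_zero] at h
  change rPlus r (-(br (rPlus r x)).dualMap y + (br (rMinus r y)).dualMap x) = _
  rw [map_add, map_neg]
  linear_combination (norm := module) -h

lemma rPlus_dualMul {mul : A →ₗ[k] A →ₗ[k] A} {r : A ⊗[k] A}
    (hcomm : ∀ a b, mul a b = mul b a) (ha : aybe mul r = 0) (x y : Module.Dual k A) :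
    rPlus r (dualMul mul r x y) = mul (rPlus r x) (rPlus r y) := by
  have h := congrArg (contractTwo k A x y) ha
  have hflip : mul.flip (rPlus r x) = mul (rPlus r x) := LinearMap.ext fun b => hcomm b _
  simp only [aybe, map_add, map_sub, contractTwo_T1213, contractTwo_T1323, contractTwo_T2312,
    hflip, map_zero] at h
  change rPlus r ((mul (rPlus r x)).dualMap y + (mul (rMinus r y)).dualMap x) = _
  rw [map_add]
  linear_combination (norm := module) -h

lemma rPlus_dualMap_of_map_add_map_eq_zero {f : A →ₗ[k] A} {s : A ⊗[k] A}
    (h : TensorProduct.map f LinearMap.id s + TensorProduct.map LinearMap.id f s = 0)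
    (x : Module.Dual k A) :
    rPlus s (f.dualMap x) = - f (rPlus s x) := by
  have h' := congrArg (fun t => rPlus t x) h
  simp only [map_add, LinearMap.add_apply, rPlus_map_id, rPlus_id_map, map_zero,
    LinearMap.zero_apply] at h'
  exact eq_neg_of_add_eq_zero_left h'

lemma rPlus_dualMap_of_map_sub_map_eq_zero {f : A →ₗ[k] A} {s : A ⊗[k] A}
    (h : TensorProduct.map f LinearMap.id s - TensorProduct.map LinearMap.id f s = 0)
    (x : Module.Dual k A) :
    rPlus s (f.dualMap x) = f (rPlus s x) := by
  have h' := congrArg (fun t => rPlus t x) h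
  simp only [map_sub, LinearMap.sub_apply, rPlus_map_id, rPlus_id_map, map_zero,
    LinearMap.zero_apply] at h'
  exact sub_eq_zero.mp h'

lemma rPlus_sub_rMinus_of_eq_add {r S Lam : A ⊗[k] A} (hdec : r = S + Lam) (hS : tauT S = S)
    (hLam : tauT Lam = - Lam) : rPlus r - rMinus r = (2 : k) • rPlus S := by
  ext x
  simp [rMinus_apply, hdec, hS, hLam, two_smul]

lemma rMinus_dualBr {br : A →ₗ[k] A →ₗ[k] A} {r : A ⊗[k] A}
    (hanti : ∀ a b, br a b = - br b a) (hc : cybe br r = 0)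
    (hI : ∀ a x, (rPlus r - rMinus r) ((br a).dualMap x) = - br a ((rPlus r - rMinus r) x))
    (x y : Module.Dual k A) :
    rMinus r (dualBr br r x y) = br (rMinus r x) (rMinus r y) := by
  have hminus : rMinus r (dualBr br r x y)
      = rPlus r (dualBr br r x y) - (rPlus r - rMinus r) (dualBr br r x y) := by simp
  rw [hminus, rPlus_dualBr hc]
  simp only [dualBr, LinearMap.mk₂_apply, map_add, map_neg, hI, LinearMap.sub_apply, map_sub]
  rw [hanti (rMinus r y) (rPlus r x), hanti (rMinus r y) (rMinus r x)]
  abel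

lemma rMinus_dualMul {mul : A →ₗ[k] A →ₗ[k] A} {r : A ⊗[k] A}
    (hcomm : ∀ a b, mul a b = mul b a) (ha : aybe mul r = 0)
    (hI : ∀ a x, (rPlus r - rMinus r) ((mul a).dualMap x) = mul a ((rPlus r - rMinus r) x))
    (x y : Module.Dual k A) :
    rMinus r (dualMul mul r x y) = mul (rMinus r x) (rMinus r y) := by
  have hminus : rMinus r (dualMul mul r x y)
      = rPlus r (dualMul mul r x y) - (rPlus r - rMinus r) (dualMul mul r x y) := by simp
  rw [hminus, rPlus_dualMul hcomm ha]
  simp only [dualMul, LinearMap.mk₂_apply, map_add, hI, LinearMap.sub_apply, map_sub]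
  rw [hcomm (rMinus r y) (rPlus r x), hcomm (rMinus r y) (rMinus r x)]
  abel

end PoissonBialgebra

section Factorization

variable {k V W : Type*} [Field k] [AddCommGroup V] [Module k V] [AddCommGroup W] [Module k W]

lemma injective_prod_of_injective_sub {φ ψ : V →ₗ[k] W} (h : Function.Injective (φ - ψ)) :
    Function.Injective (φ.prod ψ) :=
  Function.Injective.of_comp (f := LinearMap.fst k W W - LinearMap.snd k W W) h

lemma existsUnique_mem_range_prod_of_bijective_sub {φ ψ : V →ₗ[k] W}
    (h : Function.Bijective (φ - ψ)) (a : W) :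
    ∃! p : W × W, p ∈ LinearMap.range (φ.prod ψ) ∧ a = p.1 - p.2 := by
  obtain ⟨x, rfl⟩ := h.surjective a
  refine ⟨(φ x, ψ x), ⟨⟨x, rfl⟩, rfl⟩, ?_⟩
  rintro _ ⟨⟨y, rfl⟩, hxy⟩
  rw [h.injective hxy.symm]
  rfl

end Factorization

theorem statement8_general {k A : Type*} [Field k] [AddCommGroup A] [Module k A]
    (br mul : A →ₗ[k] A →ₗ[k] A) (hP : IsPoisson br mul)
    (r S Lam : A ⊗[k] A) (hdec : r = S + Lam) (hS : tauT S = S) (hLam : tauT Lam = - Lam)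
    (hr : IsPYBESolution br mul r) (hinv : IsAdLInvariant br mul S)
    (Ir : Module.Dual k A ≃ₗ[k] A) (hIr : ∀ x, Ir x = rPlus r x - rMinus r x) :
    (∀ p q : A × A, p ∈ LinearMap.range ((rPlus r).prod (rMinus r)) →
      q ∈ LinearMap.range ((rPlus r).prod (rMinus r)) →
      ((br p.1 q.1, br p.2 q.2) ∈ LinearMap.range ((rPlus r).prod (rMinus r)) ∧
        (mul p.1 q.1, mul p.2 q.2) ∈ LinearMap.range ((rPlus r).prod (rMinus r)))) ∧
    (Function.Injective ((rPlus r).prod (rMinus r)) ∧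
      (∀ x y : Module.Dual k A,
        (rPlus r).prod (rMinus r) (dualBr br r x y) =
          (br (rPlus r x) (rPlus r y), br (rMinus r x) (rMinus r y)) ∧
        (rPlus r).prod (rMinus r) (dualMul mul r x y) =
          (mul (rPlus r x) (rPlus r y), mul (rMinus r x) (rMinus r y)))) ∧
    (∀ a : A, ∃! p : A × A,
      p ∈ LinearMap.range ((rPlus r).prod (rMinus r)) ∧ a = p.1 - p.2) ∧
    (∀ a : A,
      a = rPlus r (Ir.symm a) - rMinus r (Ir.symm a) ∧
      (rPlus r (Ir.symm a), rMinus r (Ir.symm a)) ∈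
        LinearMap.range ((rPlus r).prod (rMinus r))) := by
  obtain ⟨hc, ha⟩ := hr
  have hI : rPlus r - rMinus r = Ir.toLinearMap := LinearMap.ext fun x => (hIr x).symm
  have hIS := rPlus_sub_rMinus_of_eq_add hdec hS hLam
  have hIbr : ∀ a x, (rPlus r - rMinus r) ((br a).dualMap x) = - br a ((rPlus r - rMinus r) x) :=
    fun a x => by simp [hIS, rPlus_dualMap_of_map_add_map_eq_zero (hinv a).1]
  have hImul : ∀ a x, (rPlus r - rMinus r) ((mul a).dualMap x) = mul a ((rPlus r - rMinus r) x) :=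
    fun a x => by simp [hIS, rPlus_dualMap_of_map_sub_map_eq_zero (hinv a).2]
  have hbr : ∀ x y, (rPlus r).prod (rMinus r) (dualBr br r x y) =
      (br (rPlus r x) (rPlus r y), br (rMinus r x) (rMinus r y)) :=
    fun x y => Prod.ext (rPlus_dualBr hc x y) (rMinus_dualBr hP.antisymm hc hIbr x y)
  have hmul : ∀ x y, (rPlus r).prod (rMinus r) (dualMul mul r x y) =
      (mul (rPlus r x) (rPlus r y), mul (rMinus r x) (rMinus r y)) :=
    fun x y => Prod.ext (rPlus_dualMul hP.comm ha x y) (rMinus_dualMul hP.comm ha hImul x y)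
  refine ⟨?_, ⟨injective_prod_of_injective_sub (hI ▸ Ir.injective), fun x y => ⟨hbr x y, hmul x y⟩⟩,
    existsUnique_mem_range_prod_of_bijective_sub (hI ▸ Ir.bijective),
    fun a => ⟨by rw [← hIr, Ir.apply_symm_apply], Ir.symm a, rfl⟩⟩
  rintro _ _ ⟨x, rfl⟩ ⟨y, rfl⟩
  exact ⟨⟨_, hbr x y⟩, ⟨_, hmul x y⟩⟩

/-- a factorizable Poisson bialgebra induces a factorization of the underlying
Poisson algebra via the image of `r₊ ⊕ r₋`. -/
theorem statement8 {k A : Type*} [Field k] [AddCommGroup A] [Module k A]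
    [FiniteDimensional k A]
    (br mul : A →ₗ[k] A →ₗ[k] A) (hP : IsPoisson br mul)
    (r S Lam : A ⊗[k] A) (hdec : r = S + Lam) (hS : tauT S = S) (hLam : tauT Lam = - Lam)
    (hr : IsPYBESolution br mul r) (hinv : IsAdLInvariant br mul S)
    (Ir : Module.Dual k A ≃ₗ[k] A) (hIr : ∀ x, Ir x = rPlus r x - rMinus r x) :
    (∀ p q : A × A, p ∈ LinearMap.range ((rPlus r).prod (rMinus r)) →
      q ∈ LinearMap.range ((rPlus r).prod (rMinus r)) →
      ((br p.1 q.1, br p.2 q.2) ∈ LinearMap.range ((rPlus r).prod (rMinus r)) ∧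
        (mul p.1 q.1, mul p.2 q.2) ∈ LinearMap.range ((rPlus r).prod (rMinus r)))) ∧
    (Function.Injective ((rPlus r).prod (rMinus r)) ∧
      (∀ x y : Module.Dual k A,
        (rPlus r).prod (rMinus r) (dualBr br r x y) =
          (br (rPlus r x) (rPlus r y), br (rMinus r x) (rMinus r y)) ∧
        (rPlus r).prod (rMinus r) (dualMul mul r x y) =
          (mul (rPlus r x) (rPlus r y), mul (rMinus r x) (rMinus r y)))) ∧
    (∀ a : A, ∃! p : A × A,
      p ∈ LinearMap.range ((rPlus r).prod (rMinus r)) ∧ a = p.1 - p.2) ∧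
    (∀ a : A,
      a = rPlus r (Ir.symm a) - rMinus r (Ir.symm a) ∧
      (rPlus r (Ir.symm a), rMinus r (Ir.symm a)) ∈
        LinearMap.range ((rPlus r).prod (rMinus r))) :=
  statement8_general br mul hP r S Lam hdec hS hLam hr hinv Ir hIr
end
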